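/- Let X, Y be normed spaces, A ⊂ Y a subset, and suppose e : ℕ → ℝ and s : ℕ → ℝ are nonnegative with e nonincreasing. Let f : ℕ → ℝ be positive, eventually increasing, with f(2^j) ≤ C f(2^{j−1}) for all j. If sup_{1≤l≤n} f(l)·e(l) ≤ C' sup_{1≤l≤n} f(l)·s(l) for all n, and s(l) ≤ D l^{−γ/d} g(l) with g(l) = q^{1/2} (constant), then e(n) ≤ C'' n^{−γ/d} q^{1/2} for all n. -/

import Mathlib

/-- The Carl-type inequality application in the proof of Theorem 3.12, with
`f*(l) = l^{γ/d} q^{-1/2}`: a Carl inequality relating the suprema of `f*·e` and `f*·s`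
over `1 ≤ l ≤ n`, together with a power-law bound on the widths `s`, transfers to a
power-law bound on the entropy numbers `e`. -/
theorem stmt15 (X Y : Type) [NormedAddCommGroup X] [NormedAddCommGroup Y] (A : Set Y)
    (e s : ℕ → ℝ) (γ d q C' D : ℝ) (hγ : 0 < γ) (hd : 0 < d) (hq : 0 < q)
    (hC' : 0 < C') (hD : 0 < D)
    (he0 : ∀ l, 0 ≤ e l) (hs0 : ∀ l, 0 ≤ s l) (hanti : Antitone e)
    (hfpos : ∀ l : ℕ, 1 ≤ l → 0 < (l : ℝ) ^ (γ / d) * q ^ (-(1 / 2) : ℝ))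
    (hfmono : ∀ l l' : ℕ, 1 ≤ l → l ≤ l' →
      (l : ℝ) ^ (γ / d) * q ^ (-(1 / 2) : ℝ) ≤ (l' : ℝ) ^ (γ / d) * q ^ (-(1 / 2) : ℝ))
    (hfdouble : ∀ j : ℕ, 1 ≤ j →
      ((2 ^ j : ℕ) : ℝ) ^ (γ / d) * q ^ (-(1 / 2) : ℝ) ≤
        2 ^ (γ / d) * (((2 ^ (j - 1) : ℕ) : ℝ) ^ (γ / d) * q ^ (-(1 / 2) : ℝ)))
    (hcarl : ∀ n : ℕ, 1 ≤ n →
      sSup {r : ℝ | ∃ l, 1 ≤ l ∧ l ≤ n ∧ r = (l : ℝ) ^ (γ / d) * q ^ (-(1 / 2) : ℝ) * e l} ≤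
        C' * sSup {r : ℝ | ∃ l, 1 ≤ l ∧ l ≤ n ∧
          r = (l : ℝ) ^ (γ / d) * q ^ (-(1 / 2) : ℝ) * s l})
    (hs : ∀ l : ℕ, 1 ≤ l → s l ≤ D * (l : ℝ) ^ (-(γ / d)) * q ^ ((1 / 2) : ℝ)) :
    ∃ C'' > (0 : ℝ), ∀ n : ℕ, 1 ≤ n →
      e n ≤ C'' * (n : ℝ) ^ (-(γ / d)) * q ^ ((1 / 2) : ℝ) := by
  refine ⟨C' * D, by positivity, fun n hn => ?_⟩
  set f : ℕ → ℝ := fun l => (l : ℝ) ^ (γ / d) * q ^ (-(1 / 2) : ℝ) with hf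
  -- f n * e n ≤ sSup LHS
  have hbdd : BddAbove {r : ℝ | ∃ l, 1 ≤ l ∧ l ≤ n ∧ r = f l * e l} := by
    refine ⟨f n * e 1, fun r hr => ?_⟩
    obtain ⟨l, hl1, hln, rfl⟩ := hr
    have h1 : f l * e l ≤ f n * e l :=
      mul_le_mul_of_nonneg_right (hfmono l n hl1 hln) (he0 l)
    have h2 : f n * e l ≤ f n * e 1 :=
      mul_le_mul_of_nonneg_left (hanti hl1) (hfpos n hn).le
    exact h1.trans h2
  have hmem : f n * e n ∈ {r : ℝ | ∃ l, 1 ≤ l ∧ l ≤ n ∧ r = f l * e l} :=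
    ⟨n, hn, le_refl n, rfl⟩
  have hle1 : f n * e n ≤ sSup {r : ℝ | ∃ l, 1 ≤ l ∧ l ≤ n ∧ r = f l * e l} :=
    le_csSup hbdd hmem
  -- sSup RHS ≤ D
  have hle2 : sSup {r : ℝ | ∃ l, 1 ≤ l ∧ l ≤ n ∧ r = f l * s l} ≤ D := by
    apply Real.sSup_le _ hD.le
    rintro r ⟨l, hl1, hln, rfl⟩
    have hsl := hs l hl1
    have hfl := hfpos l hl1
    have hlpos : (0 : ℝ) < (l : ℝ) := by exact_mod_cast hl1
    have : f l * s l ≤ f l * (D * (l : ℝ) ^ (-(γ / d)) * q ^ ((1 / 2) : ℝ)) :=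
      mul_le_mul_of_nonneg_left hsl hfl.le
    refine this.trans_eq ?_
    have h1 : (l : ℝ) ^ (γ / d) * (l : ℝ) ^ (-(γ / d)) = 1 := by
      rw [← Real.rpow_add hlpos]; simp
    have h2 : q ^ (-(1 / 2) : ℝ) * q ^ ((1 / 2) : ℝ) = 1 := by
      rw [← Real.rpow_add hq]; simp
    calc f l * (D * (l : ℝ) ^ (-(γ / d)) * q ^ ((1 / 2) : ℝ))
        = D * (((l : ℝ) ^ (γ / d) * (l : ℝ) ^ (-(γ / d))) *
            (q ^ (-(1 / 2) : ℝ) * q ^ ((1 / 2) : ℝ))) := by simp [hf]; ring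
      _ = D := by rw [h1, h2]; ring
  have hkey : f n * e n ≤ C' * D :=
    hle1.trans ((hcarl n hn).trans (by nlinarith [hle2]))
  -- divide
  have hnpos : (0 : ℝ) < (n : ℝ) := by exact_mod_cast hn
  have ha : (0 : ℝ) < (n : ℝ) ^ (γ / d) := Real.rpow_pos_of_pos hnpos _
  have hb : (0 : ℝ) < q ^ ((1 / 2) : ℝ) := Real.rpow_pos_of_pos hq _
  have h1 : (n : ℝ) ^ (γ / d) * (n : ℝ) ^ (-(γ / d)) = 1 := by
    rw [← Real.rpow_add hnpos]; simp
  have h2 : q ^ (-(1 / 2) : ℝ) * q ^ ((1 / 2) : ℝ) = 1 := by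
    rw [← Real.rpow_add hq]; simp
  have hg : C' * D * (n : ℝ) ^ (-(γ / d)) * q ^ ((1 / 2) : ℝ) * f n = C' * D := by
    simp only [hf]
    calc C' * D * (n : ℝ) ^ (-(γ / d)) * q ^ ((1 / 2) : ℝ) *
          ((n : ℝ) ^ (γ / d) * q ^ (-(1 / 2) : ℝ))
        = C' * D * (((n : ℝ) ^ (γ / d) * (n : ℝ) ^ (-(γ / d))) *
            (q ^ (-(1 / 2) : ℝ) * q ^ ((1 / 2) : ℝ))) := by ring
      _ = C' * D := by rw [h1, h2]; ring
  have hfn := hfpos n hn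
  rw [← mul_le_mul_iff_of_pos_right hfn, hg]
  calc e n * f n = f n * e n := by ring
    _ ≤ C' * D := hkey
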